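/- Let H be a Hilbert space and let L: H → ℝ. Suppose for every ψ in a ball B of radius r around φ in the Hilbert norm, there is a two-parameter function F(ψ', ψ) such that L(ψ) = F(ψ, ψ), F(ψ', ψ) ≤ F(ψ, ψ) for all ψ' (i.e., ψ' = ψ maximizes F(·, ψ)), the map ψ' ↦ F(ψ', ψ) is L-smooth at ψ (so |F(φ, ψ) - F(ψ, ψ)| ≤ (L/2)‖φ-ψ‖² since the gradient vanishes at the maximizer), and the map ψ ↦ F(φ, ψ) satisfies the L-smoothness bound |F(φ, ψ) - F(φ, φ) - ⟨g, ψ-φ⟩| ≤ (L/2)‖ψ-φ‖² for some g ∈ H. Then L is 2L-smooth at φ: |L(ψ) - L(φ) - ⟨g, ψ-φ⟩| ≤ L‖ψ-φ‖² for all ψ ∈ B. -/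

import Mathlib

open Metric

/-- Proposition 1 (abstract form): a max-type function sandwiched by quadratic
bounds is `2L`-smooth at `φ`. -/
theorem max_function_is_2L_smooth
    {H : Type*} [NormedAddCommGroup H] [InnerProductSpace ℝ H]
    (Lf : H → ℝ) (F : H → H → ℝ) (φ g : H) (r L₀ : ℝ) (hr : 0 < r)
    (hval : ∀ ψ ∈ ball φ r, Lf ψ = F ψ ψ)
    (hmax : ∀ ψ ∈ ball φ r, ∀ ψ' : H, F ψ' ψ ≤ F ψ ψ)
    (hsmooth₁ : ∀ ψ ∈ ball φ r, |F φ ψ - F ψ ψ| ≤ L₀ / 2 * ‖φ - ψ‖ ^ 2)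
    (hsmooth₂ : ∀ ψ ∈ ball φ r,
      |F φ ψ - F φ φ - (inner ℝ g (ψ - φ) : ℝ)| ≤ L₀ / 2 * ‖ψ - φ‖ ^ 2) :
    ∀ ψ ∈ ball φ r,
      |Lf ψ - Lf φ - (inner ℝ g (ψ - φ) : ℝ)| ≤ L₀ * ‖ψ - φ‖ ^ 2 := by
  intro ψ hψ
  have hφ : φ ∈ ball φ r := mem_ball_self hr
  rw [hval ψ hψ, hval φ hφ]
  have h1 := hsmooth₁ ψ hψ
  have h2 := hsmooth₂ ψ hψ
  have hnorm : ‖φ - ψ‖ = ‖ψ - φ‖ := by rw [norm_sub_rev]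
  rw [hnorm] at h1
  calc |F ψ ψ - F φ φ - (inner ℝ g (ψ - φ) : ℝ)|
      = |(F ψ ψ - F φ ψ) + (F φ ψ - F φ φ - (inner ℝ g (ψ - φ) : ℝ))| := by ring_nf
    _ ≤ |F ψ ψ - F φ ψ| + |F φ ψ - F φ φ - (inner ℝ g (ψ - φ) : ℝ)| := abs_add_le _ _
    _ ≤ L₀ / 2 * ‖ψ - φ‖ ^ 2 + L₀ / 2 * ‖ψ - φ‖ ^ 2 := by
        have := h1; rw [abs_sub_comm] at this; exact add_le_add this h2
    _ = L₀ * ‖ψ - φ‖ ^ 2 := by ring
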